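/- arXiv:1510.04639 — 3 statements merged into one kernel-verified Lean document; each statement's English description precedes it below -/
import Mathlib

section
/- Let F_n : Γ → ℂ (n ≥ 1) be such that for every σ ∈ Γ the sequence (F_n(σ))_{n≥1} converges in ℂ, and suppose there exist constants C ≥ 0 and p ≥ 0 such that |F_n(σ)| ≤ C·λ_σ^p for all n ≥ 1 and all σ ∈ Γ. Then there exist F : Γ → ℂ and q ≥ 0 such that the families σ ↦ λ_σ^{-2q}|F(σ)|² and σ ↦ λ_σ^{-2q}|F_n(σ)|² are summable, and ∑_{σ∈Γ} λ_σ^{-2q}|F_n(σ) − F(σ)|² → 0 as n → ∞ (indeed F(σ) = lim_n F_n(σ), and any q > p + 1/2 works). -/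
open Filter Topology

/-- `lam σ = ∏_{k ∈ σ} (k+1)`, with `lam ∅ = 1`. -/
noncomputable def lam (σ : Finset ℕ) : ℝ := ∏ k ∈ σ, ((k : ℝ) + 1)

lemma lam_pos (σ : Finset ℕ) : 0 < lam σ :=
  Finset.prod_pos (fun k _ => by positivity)

lemma summable_prod_finset {f : ℕ → ℝ} (hf0 : ∀ k, 0 ≤ f k) (hf : Summable f) :
    Summable (fun s : Finset ℕ => ∏ k ∈ s, f k) := by
  apply summable_of_sum_le (c := Real.exp (∑' k, f k))
    (fun s => Finset.prod_nonneg fun k _ => hf0 k)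
  intro T
  set N : ℕ := (T.sup fun s => s.sup id) + 1 with hN
  have hsub : ∀ s ∈ T, s ⊆ Finset.range N := by
    intro s hs k hk
    have : k ≤ T.sup fun s => s.sup id :=
      le_trans (Finset.le_sup (f := id) hk) (Finset.le_sup hs)
    simp only [Finset.mem_range, hN]
    omega
  have h1 : ∑ s ∈ T, ∏ k ∈ s, f k ≤ ∑ s ∈ (Finset.range N).powerset, ∏ k ∈ s, f k := by
    apply Finset.sum_le_sum_of_subset_of_nonneg
    · intro s hs; exact Finset.mem_powerset.mpr (hsub s hs)
    · intro s _ _; exact Finset.prod_nonneg fun k _ => hf0 k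
  have h2 : ∑ s ∈ (Finset.range N).powerset, ∏ k ∈ s, f k
      = ∏ k ∈ Finset.range N, (f k + 1) := by
    rw [Finset.prod_add]
    simp
  have h3 : ∏ k ∈ Finset.range N, (f k + 1) ≤ Real.exp (∑ k ∈ Finset.range N, f k) := by
    rw [Real.exp_sum]
    apply Finset.prod_le_prod (fun k _ => by have := hf0 k; linarith)
    exact fun k _ => Real.add_one_le_exp (f k)
  have h4 : ∑ k ∈ Finset.range N, f k ≤ ∑' k, f k := Summable.sum_le_tsum _ (fun k _ => hf0 k) hf
  calc ∑ s ∈ T, ∏ k ∈ s, f k ≤ ∏ k ∈ Finset.range N, (f k + 1) := h2 ▸ h1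
    _ ≤ Real.exp (∑ k ∈ Finset.range N, f k) := h3
    _ ≤ Real.exp (∑' k, f k) := Real.exp_le_exp.mpr h4

/-- Key summability: `∑_σ lam σ ^ (-r) < ∞` for `r > 1`. -/
lemma summable_lam_rpow {r : ℝ} (hr : 1 < r) :
    Summable (fun σ : Finset ℕ => lam σ ^ (-r)) := by
  have key : ∀ σ : Finset ℕ, lam σ ^ (-r) = ∏ k ∈ σ, ((k : ℝ) + 1) ^ (-r) := by
    intro σ
    rw [lam, ← Real.finset_prod_rpow σ _ (fun k _ => by positivity)]
  simp only [key]
  apply summable_prod_finset (fun k => by positivity)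
  have : Summable (fun n : ℕ => (n : ℝ) ^ (-r)) := Real.summable_nat_rpow.mpr (by linarith)
  have h2 := this.comp_injective (add_right_injective 1)
  apply h2.congr
  intro k
  simp [Function.comp, add_comm]

/-- If `(Fₙ(σ))` converges for every `σ` and `|Fₙ(σ)| ≤ C·lam σ^p` uniformly in `n`, then there
is a limit `F` (the pointwise limit) such that for every `q > p + 1/2` the relevant families
are summable and `∑_σ lam σ^(-2q) |Fₙ σ - F σ|² → 0`. -/
theorem stmt4 (Fn : ℕ → Finset ℕ → ℂ)
    (hconv : ∀ σ : Finset ℕ, ∃ L : ℂ, Tendsto (fun n : ℕ => Fn n σ) atTop (nhds L))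
    (C p : ℝ) (hC : 0 ≤ C) (hp : 0 ≤ p)
    (hbd : ∀ (n : ℕ) (σ : Finset ℕ), ‖Fn n σ‖ ≤ C * lam σ ^ p) :
    ∃ F : Finset ℕ → ℂ,
      (∀ σ : Finset ℕ, Tendsto (fun n : ℕ => Fn n σ) atTop (nhds (F σ))) ∧
      ∀ q : ℝ, p + 1 / 2 < q →
        Summable (fun σ : Finset ℕ => lam σ ^ (-(2 * q)) * ‖F σ‖ ^ 2) ∧
        (∀ n : ℕ,
          Summable (fun σ : Finset ℕ => lam σ ^ (-(2 * q)) * ‖Fn n σ‖ ^ 2)) ∧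
        Tendsto
          (fun n : ℕ => ∑' σ : Finset ℕ, lam σ ^ (-(2 * q)) * ‖Fn n σ - F σ‖ ^ 2)
          atTop (nhds 0) := by
  choose F hF using hconv
  have hFbd : ∀ σ, ‖F σ‖ ≤ C * lam σ ^ p := by
    intro σ
    exact le_of_tendsto ((continuous_norm.tendsto _).comp (hF σ))
      (Filter.Eventually.of_forall fun n => hbd n σ)
  refine ⟨F, hF, fun q hq => ?_⟩
  have hr : 1 < 2 * q - 2 * p := by linarith
  have hsum : Summable (fun σ : Finset ℕ => lam σ ^ (-(2 * q - 2 * p))) :=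
    summable_lam_rpow hr
  -- general summability for functions bounded by `c * lam^p`
  have key : ∀ (G : Finset ℕ → ℂ) (c : ℝ), 0 ≤ c →
      (∀ σ, ‖G σ‖ ≤ c * lam σ ^ p) →
      Summable (fun σ : Finset ℕ => lam σ ^ (-(2 * q)) * ‖G σ‖ ^ 2) := by
    intro G c hc hG
    have hle : ∀ σ : Finset ℕ, lam σ ^ (-(2 * q)) * ‖G σ‖ ^ 2
        ≤ c ^ 2 * lam σ ^ (-(2 * q - 2 * p)) := by
      intro σ
      have hlp : (0 : ℝ) < lam σ := lam_pos σ
      have h1 : ‖G σ‖ ^ 2 ≤ (c * lam σ ^ p) ^ 2 :=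
        pow_le_pow_left₀ (norm_nonneg _) (hG σ) 2
      have h2 : lam σ ^ (-(2 * q)) * ‖G σ‖ ^ 2
          ≤ lam σ ^ (-(2 * q)) * (c * lam σ ^ p) ^ 2 :=
        mul_le_mul_of_nonneg_left h1 (Real.rpow_nonneg hlp.le _)
      have h3 : lam σ ^ (-(2 * q)) * (c * lam σ ^ p) ^ 2
          = c ^ 2 * lam σ ^ (-(2 * q - 2 * p)) := by
        rw [mul_pow, ← Real.rpow_natCast (lam σ ^ p) 2, ← Real.rpow_mul hlp.le,
          ← mul_assoc, mul_comm (lam σ ^ (-(2 * q))) (c ^ 2), mul_assoc,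
          ← Real.rpow_add hlp]
        congr 1
        push_cast
        ring
      exact h3 ▸ h2
    exact Summable.of_nonneg_of_le
      (fun σ => mul_nonneg (Real.rpow_nonneg (lam_pos σ).le _) (sq_nonneg _))
      hle (hsum.mul_left _)
  refine ⟨key F C hC hFbd, fun n => key (Fn n) C hC (hbd n), ?_⟩
  -- dominated convergence
  have h0 : (0 : ℝ) = ∑' σ : Finset ℕ,
      (fun σ : Finset ℕ => (0 : ℝ)) σ := by simp
  rw [show (nhds (0:ℝ)) = nhds (∑' _ : Finset ℕ, (0:ℝ)) by simp]
  apply tendsto_tsum_of_dominated_convergence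
    (bound := fun σ => (2 * C) ^ 2 * lam σ ^ (-(2 * q - 2 * p)))
  · exact hsum.mul_left _
  · intro σ
    have : Tendsto (fun n => Fn n σ - F σ) atTop (nhds 0) := by
      simpa using (hF σ).sub_const (F σ)
    have : Tendsto (fun n => lam σ ^ (-(2 * q)) * ‖Fn n σ - F σ‖ ^ 2)
        atTop (nhds (lam σ ^ (-(2 * q)) * ‖(0:ℂ)‖ ^ 2)) := by
      exact (((continuous_norm.tendsto _).comp this).pow 2).const_mul _
    simpa using this
  · apply Filter.Eventually.of_forall
    intro n σ
    have hdiff : ‖Fn n σ - F σ‖ ≤ 2 * C * lam σ ^ p := by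
      calc ‖Fn n σ - F σ‖ ≤ ‖Fn n σ‖ + ‖F σ‖ := by
            simpa [sub_eq_add_neg] using norm_add_le (Fn n σ) (-(F σ))
        _ ≤ C * lam σ ^ p + C * lam σ ^ p := add_le_add (hbd n σ) (hFbd σ)
        _ = 2 * C * lam σ ^ p := by ring
    have hlp : (0 : ℝ) < lam σ := lam_pos σ
    rw [Real.norm_eq_abs, abs_of_nonneg (by positivity)]
    calc lam σ ^ (-(2 * q)) * ‖Fn n σ - F σ‖ ^ 2
        ≤ lam σ ^ (-(2 * q)) * (2 * C * lam σ ^ p) ^ 2 := by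
          apply mul_le_mul_of_nonneg_left
            (pow_le_pow_left₀ (norm_nonneg _) hdiff 2) (Real.rpow_nonneg hlp.le _)
      _ = (2 * C) ^ 2 * lam σ ^ (-(2 * q - 2 * p)) := by
          rw [mul_pow, ← Real.rpow_natCast (lam σ ^ p) 2, ← Real.rpow_mul hlp.le,
            ← mul_assoc, mul_comm (lam σ ^ (-(2 * q))) ((2 * C) ^ 2), mul_assoc,
            ← Real.rpow_add hlp]
          congr 1
          push_cast
          ring
end

section
/- Let I be a nonempty index set and (F_i)_{i∈I} a family of functions Γ → ℂ, each satisfying a polynomial growth bound (for each i there exist C ≥ 0, r ≥ 0 with |F_i(σ)| ≤ C·λ_σ^r for all σ). Then the following are equivalent: (1) there exist p ≥ 0 and a constant K < ∞ such that for every i ∈ I the family σ ↦ λ_σ^{-2p}|F_i(σ)|² is summable with ∑_{σ∈Γ} λ_σ^{-2p}|F_i(σ)|² ≤ K²; (2) there exist constants C ≥ 0 and p ≥ 0 such that |F_i(σ)| ≤ C·λ_σ^p for all i ∈ I and all σ ∈ Γ. -/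
open Filter Topology

lemma one_le_lam (σ : Finset ℕ) : 1 ≤ lam σ := by
  unfold lam
  calc (1:ℝ) = ∏ _k ∈ σ, (1:ℝ) := by simp
    _ ≤ ∏ k ∈ σ, ((k:ℝ) + 1) := by
        refine Finset.prod_le_prod (fun k _ => zero_le_one) fun k _ => ?_
        have := Nat.cast_nonneg (α := ℝ) k
        linarith

/-- the weight function `g σ = ∏_{k∈σ} 1/(k+1)^2`. -/
noncomputable def glam (σ : Finset ℕ) : ℝ := ∏ k ∈ σ, (1 / ((k : ℝ) + 1) ^ 2)

lemma glam_eq (σ : Finset ℕ) : glam σ = lam σ ^ (-2 : ℝ) := by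
  rw [Real.rpow_neg (lam_pos σ).le, show ((2:ℝ)) = ((2:ℕ):ℝ) by norm_num,
    Real.rpow_natCast, lam, ← Finset.prod_pow, ← Finset.prod_inv_distrib]
  exact Finset.prod_congr rfl fun k _ => (one_div _)

lemma glam_nonneg (σ : Finset ℕ) : 0 ≤ glam σ :=
  Finset.prod_nonneg fun k _ => by positivity

lemma summable_aux : Summable (fun k : ℕ => 1 / ((k : ℝ) + 1) ^ 2) := by
  have : Summable (fun k : ℕ => 1 / ((k : ℝ)) ^ 2) :=
    Real.summable_one_div_nat_pow.mpr one_lt_two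
  have h := this.comp_injective Nat.succ_injective
  refine h.congr fun k => ?_
  simp [Function.comp, Nat.succ_eq_add_one]

/-- The bound on partial sums of `glam`. -/
noncomputable def Bexp : ℝ := Real.exp (∑' k : ℕ, 1 / ((k : ℝ) + 1) ^ 2)

lemma Bexp_nonneg : 0 ≤ Bexp := (Real.exp_pos _).le

lemma sum_glam_le (u : Finset (Finset ℕ)) : ∑ σ ∈ u, glam σ ≤ Bexp := by
  classical
  set n := u.sup (fun σ => σ.sup id) + 1 with hn
  have hsub : u ⊆ (Finset.range n).powerset := by
    intro σ hσ
    rw [Finset.mem_powerset]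
    intro k hk
    rw [Finset.mem_range]
    have : k ≤ σ.sup id := Finset.le_sup (f := id) hk
    have h2 : σ.sup id ≤ u.sup (fun σ => σ.sup id) := Finset.le_sup hσ
    omega
  have h1 : ∑ σ ∈ u, glam σ ≤ ∑ σ ∈ (Finset.range n).powerset, glam σ :=
    Finset.sum_le_sum_of_subset_of_nonneg hsub fun σ _ _ => glam_nonneg σ
  have h2 : ∑ σ ∈ (Finset.range n).powerset, glam σ
      = ∏ k ∈ Finset.range n, (1 / ((k : ℝ) + 1) ^ 2 + 1) := by
    rw [Finset.prod_add]
    exact Finset.sum_congr rfl fun t _ => by simp [glam]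
  have h3 : ∏ k ∈ Finset.range n, (1 / ((k : ℝ) + 1) ^ 2 + 1)
      ≤ Real.exp (∑ k ∈ Finset.range n, 1 / ((k : ℝ) + 1) ^ 2) := by
    rw [Real.exp_sum]
    refine Finset.prod_le_prod (fun k _ => by positivity) fun k _ => ?_
    have := Real.add_one_le_exp (1 / ((k : ℝ) + 1) ^ 2)
    linarith
  have h4 : ∑ k ∈ Finset.range n, 1 / ((k : ℝ) + 1) ^ 2
      ≤ ∑' k : ℕ, 1 / ((k : ℝ) + 1) ^ 2 :=
    Summable.sum_le_tsum _ (fun k _ => by positivity) summable_aux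
  calc ∑ σ ∈ u, glam σ ≤ _ := h1
    _ = _ := h2
    _ ≤ _ := h3
    _ ≤ Bexp := Real.exp_le_exp.mpr h4

lemma summable_glam : Summable glam :=
  summable_of_sum_le glam_nonneg sum_glam_le

lemma tsum_glam_le : ∑' σ : Finset ℕ, glam σ ≤ Bexp :=
  Summable.tsum_le_of_sum_le summable_glam sum_glam_le

lemma tsum_glam_nonneg : 0 ≤ ∑' σ : Finset ℕ, glam σ :=
  tsum_nonneg glam_nonneg

/-- A family `(F_i)` of Fock transforms of generalized functionals (each of polynomial growth)
is contained and bounded in some `S_p^*(M)` if and only if it satisfies a uniform polynomial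
growth bound `|F_i(σ)| ≤ C·lam σ^p`. -/
theorem stmt9 (I : Type*) [Nonempty I] (F : I → Finset ℕ → ℂ)
    (hgrow : ∀ i : I, ∃ C ≥ (0 : ℝ), ∃ r ≥ (0 : ℝ),
      ∀ σ : Finset ℕ, ‖F i σ‖ ≤ C * lam σ ^ r) :
    (∃ p ≥ (0 : ℝ), ∃ K : ℝ,
        ∀ i : I,
          Summable (fun σ : Finset ℕ => lam σ ^ (-(2 * p)) * ‖F i σ‖ ^ 2) ∧
          (∑' σ : Finset ℕ, lam σ ^ (-(2 * p)) * ‖F i σ‖ ^ 2) ≤ K ^ 2)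
      ↔
    (∃ C ≥ (0 : ℝ), ∃ p ≥ (0 : ℝ),
      ∀ (i : I) (σ : Finset ℕ), ‖F i σ‖ ≤ C * lam σ ^ p) := by
  constructor
  · rintro ⟨p, hp, K, h⟩
    refine ⟨|K|, abs_nonneg K, p, hp, fun i σ => ?_⟩
    obtain ⟨hsum, hle⟩ := h i
    have hterm : lam σ ^ (-(2 * p)) * ‖F i σ‖ ^ 2 ≤ K ^ 2 := by
      refine le_trans (Summable.le_tsum hsum σ fun σ' _ => ?_) hle
      exact mul_nonneg (Real.rpow_nonneg (lam_pos σ').le _) (sq_nonneg _)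
    have hL := lam_pos σ
    have hsq : ‖F i σ‖ ^ 2 ≤ (|K| * lam σ ^ p) ^ 2 := by
      have hps : (lam σ ^ p) ^ 2 = lam σ ^ (2 * p) := by
        rw [sq, ← Real.rpow_add hL, two_mul]
      have hrw : (|K| * lam σ ^ p) ^ 2 = K ^ 2 * lam σ ^ (2 * p) := by
        rw [mul_pow, sq_abs, hps]
      rw [hrw]
      have hinv : lam σ ^ (-(2 * p)) = (lam σ ^ (2 * p))⁻¹ := by
        rw [Real.rpow_neg hL.le]
      have hpow : (0:ℝ) < lam σ ^ (2 * p) := Real.rpow_pos_of_pos hL _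
      rw [hinv, inv_mul_le_iff₀ hpow] at hterm
      calc ‖F i σ‖ ^ 2 ≤ K ^ 2 * lam σ ^ (2 * p) := by linarith
        _ = _ := rfl
    have h1 : (0:ℝ) ≤ ‖F i σ‖ := norm_nonneg _
    have h2 : (0:ℝ) ≤ |K| * lam σ ^ p := by positivity
    exact (pow_le_pow_iff_left₀ h1 h2 two_ne_zero).mp hsq
  · rintro ⟨C, hC, p, hp, h⟩
    refine ⟨p + 1, by linarith, C * Real.sqrt (∑' σ : Finset ℕ, glam σ), fun i => ?_⟩
    have key : ∀ σ : Finset ℕ,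
        lam σ ^ (-(2 * (p + 1))) * ‖F i σ‖ ^ 2 ≤ C ^ 2 * glam σ := by
      intro σ
      have hL := lam_pos σ
      have hb : ‖F i σ‖ ^ 2 ≤ (C * lam σ ^ p) ^ 2 :=
        pow_le_pow_left₀ (norm_nonneg _) (h i σ) 2
      have hpow : (0:ℝ) < lam σ ^ (-(2 * (p + 1))) := Real.rpow_pos_of_pos hL _
      calc lam σ ^ (-(2 * (p + 1))) * ‖F i σ‖ ^ 2
          ≤ lam σ ^ (-(2 * (p + 1))) * (C * lam σ ^ p) ^ 2 :=
            mul_le_mul_of_nonneg_left hb hpow.le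
        _ = C ^ 2 * (lam σ ^ (-(2 * (p + 1))) * lam σ ^ (2 * p)) := by
            rw [mul_pow, sq (lam σ ^ p), ← Real.rpow_add hL, two_mul]; ring
        _ = C ^ 2 * glam σ := by
            rw [glam_eq, ← Real.rpow_add hL]
            congr 2
            ring
    have hnonneg : ∀ σ : Finset ℕ,
        0 ≤ lam σ ^ (-(2 * (p + 1))) * ‖F i σ‖ ^ 2 := by
      intro σ
      have := (lam_pos σ).le
      positivity
    have hsum : Summable (fun σ : Finset ℕ =>
        lam σ ^ (-(2 * (p + 1))) * ‖F i σ‖ ^ 2) :=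
      Summable.of_nonneg_of_le hnonneg key (summable_glam.mul_left (C ^ 2))
    refine ⟨hsum, ?_⟩
    have hls : (∑' σ : Finset ℕ, lam σ ^ (-(2 * (p + 1))) * ‖F i σ‖ ^ 2)
        ≤ ∑' σ : Finset ℕ, C ^ 2 * glam σ :=
      Summable.tsum_le_tsum key hsum (summable_glam.mul_left (C ^ 2))
    rw [tsum_mul_left] at hls
    refine hls.trans (le_of_eq ?_)
    rw [mul_pow, Real.sq_sqrt tsum_glam_nonneg]
end

section
/- Let F : Γ → ℂ satisfy |F(σ)| ≤ C·λ_σ^p for all σ ∈ Γ, for some constants C ≥ 0 and p ≥ 0. Define F_n : Γ → ℂ by F_n(σ) = F(σ) if σ ⊆ {0,...,n} and F_n(σ) = 0 otherwise. Then (F_n)_{n≥0} satisfies the generalized-martingale relation F_n(σ) = 𝟏_{n]}(σ)·F_{n+1}(σ) for all σ and n, and for every real q > p + 1/2 the family σ ↦ λ_σ^{-2q}|F_n(σ) − F(σ)|² is summable with ∑_{σ∈Γ} λ_σ^{-2q}|F_n(σ) − F(σ)|² → 0 as n → ∞. (Thus the convolutions Φ_n = Ψ_n^{(0)} ∗ Φ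 form an M-generalized martingale converging strongly to Φ in S^*(M).) -/
open Filter Topology

lemma lam_rpow (σ : Finset ℕ) (r : ℝ) : lam σ ^ r = ∏ k ∈ σ, ((k : ℝ) + 1) ^ r :=
  (Real.finset_prod_rpow σ _ (fun k _ => by positivity) r).symm

lemma summable_prod_finset_s14 (g : ℕ → ℝ) (hg : ∀ k, 0 ≤ g k) (hsum : Summable g) :
    Summable (fun σ : Finset ℕ => ∏ k ∈ σ, g k) := by
  apply summable_of_sum_le (c := Real.exp (∑' k, g k))
  · intro σ; exact Finset.prod_nonneg fun k _ => hg k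
  · intro u
    set N := (u.sup fun σ => σ.sup id) + 1 with hN
    have hsub : u ⊆ (Finset.range N).powerset := by
      intro σ hσ
      rw [Finset.mem_powerset]
      intro k hk
      rw [Finset.mem_range, hN]
      have h1 : k ≤ σ.sup id := Finset.le_sup (f := id) hk
      have h2 : σ.sup id ≤ u.sup fun σ => σ.sup id := Finset.le_sup hσ
      omega
    calc ∑ σ ∈ u, ∏ k ∈ σ, g k
        ≤ ∑ σ ∈ (Finset.range N).powerset, ∏ k ∈ σ, g k := by
          apply Finset.sum_le_sum_of_subset_of_nonneg hsub
          intro σ _ _; exact Finset.prod_nonneg fun k _ => hg k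
      _ = ∏ k ∈ Finset.range N, (g k + 1) := by
          rw [Finset.prod_add]; simp
      _ ≤ ∏ k ∈ Finset.range N, Real.exp (g k) := by
          apply Finset.prod_le_prod
          · intro k _; have := hg k; linarith
          · intro k _; exact Real.add_one_le_exp (g k)
      _ = Real.exp (∑ k ∈ Finset.range N, g k) := (Real.exp_sum _ _).symm
      _ ≤ Real.exp (∑' k, g k) := by
          exact Real.exp_le_exp.mpr (Summable.sum_le_tsum _ (fun k _ => hg k) hsum)

/-- For a Fock transform `F` with `|F(σ)| ≤ C·lam σ^p`, the truncations
`F_n(σ) = 𝟏_{n]}(σ)·F(σ)` (the Fock transforms of the convolutions `Ψ_n^{(0)} ∗ Φ`) form an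
`M`-generalized martingale, and for every `q > p + 1/2` one has
`∑_σ lam σ^(-2q) |F_n(σ) - F(σ)|² → 0`, i.e. strong convergence to `Φ` in `S^*(M)`. -/
theorem stmt14 (F : Finset ℕ → ℂ) (C p : ℝ) (hC : 0 ≤ C) (hp : 0 ≤ p)
    (hF : ∀ σ : Finset ℕ, ‖F σ‖ ≤ C * lam σ ^ p)
    (Fn : ℕ → Finset ℕ → ℂ)
    (hFn : ∀ (n : ℕ) (σ : Finset ℕ),
      Fn n σ = if σ ⊆ Finset.range (n + 1) then F σ else 0) :
    (∀ (n : ℕ) (σ : Finset ℕ),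
      Fn n σ = (if σ ⊆ Finset.range (n + 1) then (1 : ℂ) else 0) * Fn (n + 1) σ) ∧
    ∀ q : ℝ, p + 1 / 2 < q →
      (∀ n : ℕ,
        Summable
          (fun σ : Finset ℕ => lam σ ^ (-(2 * q)) * ‖Fn n σ - F σ‖ ^ 2)) ∧
      Tendsto
        (fun n : ℕ => ∑' σ : Finset ℕ, lam σ ^ (-(2 * q)) * ‖Fn n σ - F σ‖ ^ 2)
        atTop (nhds 0) := by
  constructor
  · intro n σ
    rw [hFn, hFn]
    by_cases h : σ ⊆ Finset.range (n + 1)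
    · have h' : σ ⊆ Finset.range (n + 2) := h.trans (by
        intro k; simp only [Finset.mem_range]; omega)
      simp [h, h']
    · simp [h]
  · intro q hq
    -- the dominating summable bound
    set g : ℕ → ℝ := fun k => ((k : ℝ) + 1) ^ (2 * p - 2 * q) with hg
    have hg0 : ∀ k, 0 ≤ g k := fun k => Real.rpow_nonneg (by positivity) _
    have hgsum : Summable g := by
      have h1 : (1 : ℝ) < 2 * q - 2 * p := by linarith
      have h2 : Summable (fun n : ℕ => 1 / (n : ℝ) ^ (2 * q - 2 * p)) :=
        Real.summable_one_div_nat_rpow.mpr h1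
      have h3 := (summable_nat_add_iff 1).mpr h2
      apply h3.congr
      intro k
      push_cast
      rw [hg, one_div, ← Real.rpow_neg (by positivity)]
      ring_nf
    have hB : Summable (fun σ : Finset ℕ => C ^ 2 * ∏ k ∈ σ, g k) :=
      (summable_prod_finset_s14 g hg0 hgsum).mul_left _
    -- pointwise nonnegativity and domination
    have hnonneg : ∀ n σ, 0 ≤ lam σ ^ (-(2 * q)) * ‖Fn n σ - F σ‖ ^ 2 :=
      fun n σ => mul_nonneg (Real.rpow_nonneg (lam_pos σ).le _) (by positivity)
    have key : ∀ n σ, lam σ ^ (-(2 * q)) * ‖Fn n σ - F σ‖ ^ 2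
        ≤ C ^ 2 * ∏ k ∈ σ, g k := by
      intro n σ
      have hl := lam_pos σ
      have habs : ‖Fn n σ - F σ‖ ≤ C * lam σ ^ p := by
        rw [hFn]
        split_ifs with h
        · simpa using mul_nonneg hC (Real.rpow_nonneg hl.le p)
        · rw [zero_sub, norm_neg]; exact hF σ
      calc lam σ ^ (-(2 * q)) * ‖Fn n σ - F σ‖ ^ 2
          ≤ lam σ ^ (-(2 * q)) * (C * lam σ ^ p) ^ 2 := by
            apply mul_le_mul_of_nonneg_left _ (Real.rpow_nonneg hl.le _)
            exact pow_le_pow_left₀ (norm_nonneg _) habs 2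
        _ = C ^ 2 * ∏ k ∈ σ, g k := by
            rw [mul_pow, ← Real.rpow_natCast (lam σ ^ p) 2, ← Real.rpow_mul hl.le]
            rw [show lam σ ^ (-(2*q)) * (C ^ 2 * lam σ ^ (p * (2:ℕ))) =
              C ^ 2 * (lam σ ^ (-(2*q)) * lam σ ^ (p * (2:ℕ))) by ring]
            rw [← Real.rpow_add hl]
            rw [show -(2*q) + p * (2:ℕ) = 2 * p - 2 * q by push_cast; ring]
            rw [lam_rpow]
    constructor
    · intro n
      exact Summable.of_nonneg_of_le (hnonneg n) (key n) hB
    · have h0 : (0 : ℝ) = ∑' _ : Finset ℕ, (0 : ℝ) := tsum_zero.symm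
      rw [h0]
      apply tendsto_tsum_of_dominated_convergence hB
      · intro σ
        apply Tendsto.congr' _ tendsto_const_nhds
        filter_upwards [eventually_ge_atTop (σ.sup id)] with n hn
        have hsub : σ ⊆ Finset.range (n + 1) := by
          intro k hk
          have : k ≤ σ.sup id := Finset.le_sup (f := id) hk
          rw [Finset.mem_range]; omega
        rw [hFn, if_pos hsub, sub_self]
        simp
      · filter_upwards with n σ
        rw [Real.norm_eq_abs, abs_of_nonneg (hnonneg n σ)]
        exact key n σ
end
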